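/- For every k ≥ 0, the Laurent polynomial W' k is nonzero and mindeg (W' k) = -4k - 10. (Equivalently, in the variable t = z², deg_L(V(W_n(B₃))) = -n - 4 for every odd n ≥ 1.) -/

import Mathlib

open LaurentPolynomial

noncomputable def U : LaurentPolynomial ℤ := -T 1 - T (-1)

noncomputable def Q3 : LaurentPolynomial ℤ :=
  T 9 - 2 * T 7 + T 5 - 2 * T 3 - 2 * T 1 - 2 * T (-1) - 2 * T (-3) + T (-5)
    - 2 * T (-7) + T (-9)

/-- The maximum exponent in the support of a Laurent polynomial. -/
noncomputable def maxdeg (p : LaurentPolynomial ℤ) : WithBot ℤ := p.coeff.support.max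

/-- The minimum exponent in the support of a Laurent polynomial. -/
noncomputable def mindeg (p : LaurentPolynomial ℤ) : WithTop ℤ := p.coeff.support.min

/-- The skein operator encoding the relation between Jones polynomials of
successive Whitehead doubles of `B₃`. -/
noncomputable def Phi (p : LaurentPolynomial ℤ) : LaurentPolynomial ℤ :=
  T (-4) * p + (T (-3) - T (-1)) * Q3

/-!
`Phi` multiplies by `z⁻⁴` and adds the fixed polynomial `(z⁻³ - z⁻¹) · Q₃`, whose lowest term is
`z⁻¹²`. Starting from `mindeg (W' 0) = -10 < -8`, the shifted part always starts strictly below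
`z⁻¹²`, so the added polynomial never touches the lowest term and `mindeg` drops by exactly `4`
at each step.
-/

namespace LaurentPolynomial

variable {R : Type*} [Semiring R]

lemma coeff_T_mul (n m : ℤ) (p : R[T;T⁻¹]) : (T n * p).coeff m = p.coeff (m - n) := by
  rw [T, AddMonoidAlgebra.coeff_single_mul_apply, one_mul, neg_add_eq_sub]

lemma coeff_T_of_ne {m n : ℤ} (h : n ≠ m) : (T n : R[T;T⁻¹]).coeff m = 0 := by
  simp [T_apply, h]

end LaurentPolynomial

lemma mindeg_le_of_coeff_ne_zero {p : ℤ[T;T⁻¹]} {m : ℤ} (h : p.coeff m ≠ 0) : mindeg p ≤ m :=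
  Finset.min_le (Finsupp.mem_support_iff.mpr h)

lemma coeff_eq_zero_of_lt_mindeg {p : ℤ[T;T⁻¹]} {m : ℤ} (h : (m : WithTop ℤ) < mindeg p) :
    p.coeff m = 0 := by
  by_contra hm
  exact (mindeg_le_of_coeff_ne_zero hm).not_gt h

lemma coeff_ne_zero_of_mindeg_eq {p : ℤ[T;T⁻¹]} {n : ℤ} (h : mindeg p = n) : p.coeff n ≠ 0 :=
  Finsupp.mem_support_iff.mp (Finset.mem_of_min h)

lemma le_mindeg_of_coeff_eq_zero {p : ℤ[T;T⁻¹]} {n : ℤ} (h : ∀ m < n, p.coeff m = 0) :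
    (n : WithTop ℤ) ≤ mindeg p := by
  refine Finset.le_min fun m hm ↦ WithTop.coe_le_coe.mpr (not_lt.mp fun hlt ↦ ?_)
  exact Finsupp.mem_support_iff.mp hm (h m hlt)

lemma mindeg_eq_of_coeff {p : ℤ[T;T⁻¹]} {n : ℤ} (hn : p.coeff n ≠ 0)
    (hlt : ∀ m < n, p.coeff m = 0) : mindeg p = n :=
  (mindeg_le_of_coeff_ne_zero hn).antisymm (le_mindeg_of_coeff_eq_zero hlt)

lemma mindeg_eq_top_iff {p : ℤ[T;T⁻¹]} : mindeg p = ⊤ ↔ p = 0 := by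
  rw [mindeg, Finset.min_eq_top, Finsupp.support_eq_empty, AddMonoidAlgebra.coeff_eq_zero]

lemma mindeg_neg (p : ℤ[T;T⁻¹]) : mindeg (-p) = mindeg p := by
  simp only [mindeg, AddMonoidAlgebra.coeff_neg, Finsupp.support_neg]

lemma mindeg_T_mul (n : ℤ) (p : ℤ[T;T⁻¹]) : mindeg (T n * p) = mindeg p + n := by
  induction h : mindeg p using WithTop.recTopCoe with
  | top => simp [mindeg_eq_top_iff.mp h, mindeg_eq_top_iff.mpr]
  | coe a =>
    rw [← WithTop.coe_add]
    refine mindeg_eq_of_coeff ?_ fun m hm ↦ ?_ <;> rw [coeff_T_mul]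
    · simpa using coeff_ne_zero_of_mindeg_eq h
    · exact coeff_eq_zero_of_lt_mindeg (by rw [h]; exact_mod_cast (by omega : m - n < a))

lemma mindeg_add_of_lt {p q : ℤ[T;T⁻¹]} (h : mindeg p < mindeg q) : mindeg (p + q) = mindeg p := by
  obtain ⟨a, ha⟩ := WithTop.ne_top_iff_exists.mp h.ne_top
  have hq : ∀ m ≤ a, q.coeff m = 0 := fun m hm ↦
    coeff_eq_zero_of_lt_mindeg ((WithTop.coe_le_coe.mpr hm).trans_lt (ha ▸ h))
  rw [← ha]
  refine mindeg_eq_of_coeff ?_ fun m hm ↦ ?_ <;>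
    rw [AddMonoidAlgebra.coeff_add, Finsupp.add_apply]
  · rw [hq a le_rfl, add_zero]
    exact coeff_ne_zero_of_mindeg_eq ha.symm
  · rw [hq m hm.le, coeff_eq_zero_of_lt_mindeg (ha ▸ WithTop.coe_lt_coe.mpr hm), add_zero]

lemma mindeg_sub_of_lt {p q : ℤ[T;T⁻¹]} (h : mindeg p < mindeg q) : mindeg (p - q) = mindeg p := by
  rw [sub_eq_add_neg, mindeg_add_of_lt (by rwa [mindeg_neg])]

lemma mindeg_Q3 : mindeg Q3 = ((-9 : ℤ) : WithTop ℤ) := by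
  refine mindeg_eq_of_coeff ?_ fun m hm ↦ ?_
  · simp [Q3, two_mul, T_apply]
  · simp (disch := omega) only [Q3, two_mul, AddMonoidAlgebra.coeff_add,
      AddMonoidAlgebra.coeff_sub, Finsupp.add_apply, Finsupp.sub_apply, coeff_T_of_ne]
    norm_num

lemma mindeg_W_one : mindeg (-T 8 + 2 * T 6 - T 4 + 2 * T 2 + 1 + T (-4) - T (-6)
      + 2 * T (-8) - T (-10)) = ((-10 : ℤ) : WithTop ℤ) := by
  -- the constant term is read as `T 0`, since there is no simp lemma for the coefficients of `1`
  refine mindeg_eq_of_coeff ?_ fun m hm ↦ ?_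
  · rw [← T_zero]
    simp [two_mul, T_apply, -T_zero]
  · simp (disch := omega) only [← T_zero, two_mul, AddMonoidAlgebra.coeff_add,
      AddMonoidAlgebra.coeff_sub, AddMonoidAlgebra.coeff_neg, Finsupp.add_apply,
      Finsupp.sub_apply, Finsupp.neg_apply, coeff_T_of_ne]
    norm_num

lemma mindeg_skein_term : mindeg ((T (-3) - T (-1)) * Q3) = ((-12 : ℤ) : WithTop ℤ) := by
  rw [sub_mul, mindeg_sub_of_lt] <;> simp only [mindeg_T_mul, mindeg_Q3]
  · rfl
  · decide

lemma mindeg_Phi {p : ℤ[T;T⁻¹]} {n : ℤ} (hp : mindeg p = n) (hn : n < -8) :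
    mindeg (Phi p) = ((n - 4 : ℤ) : WithTop ℤ) := by
  rw [Phi, mindeg_add_of_lt] <;> rw [mindeg_T_mul, hp]
  · rfl
  · rw [mindeg_skein_term]; exact_mod_cast (by omega : n + -4 < -12)

/-- The Jones polynomials of the Whitehead odd doubles `W_{2k+1}(B₃)` have
lowest degree `-4k - 10` in `z`. -/
theorem mindeg_W_odd (W' : ℕ → LaurentPolynomial ℤ)
    (hW'0 : W' 0 = -T 8 + 2 * T 6 - T 4 + 2 * T 2 + 1 + T (-4) - T (-6)
      + 2 * T (-8) - T (-10))
    (hW'rec : ∀ k : ℕ, W' (k + 1) = Phi (W' k)) :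
    ∀ k : ℕ, W' k ≠ 0 ∧ mindeg (W' k) = ((-4 * (k : ℤ) - 10 : ℤ) : WithTop ℤ) := by
  have hmin : ∀ k : ℕ, mindeg (W' k) = ((-4 * (k : ℤ) - 10 : ℤ) : WithTop ℤ) := by
    intro k
    induction k with
    | zero => simpa [hW'0] using mindeg_W_one
    | succ k ih =>
      rw [hW'rec, mindeg_Phi ih (by omega)]
      congr 1
      push_cast
      ring
  exact fun k ↦ ⟨mindeg_eq_top_iff.not.mp (hmin k ▸ WithTop.coe_ne_top), hmin k⟩
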